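/- Along any solution of the error system ė_pⁱ = e_vⁱ, mᵢė_vⁱ = uⁱ with the control law uⁱ = −Σ_{j∈Nᵢ} mᵢw_{ij}(e_vⁱ − e_vʲ) − Σ_{j∈Nᵢ} mᵢ∇_{e_pⁱ}Ṽ^{ij} − e_vⁱ, the energy function J = (1/2)Σ_{i=1}^N (Ṽⁱ + e_vⁱᵀe_vⁱ) satisfies J̇ = −e_vᵀ(L⊗Iₙ)e_v − e_vᵀ(M⁻¹⊗Iₙ)e_v ≤ 0, where M⁻¹ = diag(1/m₁, …, 1/m_N), and J̇ = 0 only if e_v¹ = ⋯ = e_vᴺ = 0. -/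

import Mathlib

open Matrix
open scoped Kronecker RealInnerProductSpace

/-!
The potentials are symmetric and even, so the pairwise forces `∇Ṽ^{ij}` are antisymmetric along
edges (Newton's third law) and the potential part of `J̇` is exactly the power
`Σᵢ Σⱼ ⟪∇Ṽ^{ij}, e_vⁱ⟫` of these forces, which the control law cancels. What is left is the
consensus damping `-Σ w_{ij} ⟪e_vⁱ, e_vⁱ - e_vʲ⟫ = -½ Σ w_{ij} ‖e_vⁱ - e_vʲ‖²`, the Laplacian
quadratic form, and the friction `-Σ ⟪e_vⁱ, e_vⁱ⟫ / mᵢ`, which vanishes only at `e_v = 0`.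
-/

theorem gradient_neg_of_even {E : Type*} [NormedAddCommGroup E] [InnerProductSpace ℝ E]
    [CompleteSpace E] {f : E → ℝ} (hf : Differentiable ℝ f) (heven : ∀ z, f (-z) = f z)
    (z : E) : gradient f (-z) = -gradient f z := by
  have h : HasGradientAt f (-gradient f (-z)) z := by
    have hcomp := (hf (-z)).hasGradientAt.hasFDerivAt.comp z (hasFDerivAt_id z).neg
    rw [show f ∘ Neg.neg = f from funext heven] at hcomp
    rw [hasGradientAt_iff_hasFDerivAt]
    exact hcomp.congr_fderiv (by ext v; simp)
  rw [h.gradient, neg_neg]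

theorem dotProduct_kronecker_one_mulVec {ι κ : Type*} [Fintype ι] [Fintype κ] [DecidableEq κ]
    (A : Matrix ι ι ℝ) (v : ι → EuclideanSpace ℝ κ) {x : ι × κ → ℝ} (hx : ∀ p, x p = v p.1 p.2) :
    x ⬝ᵥ (A ⊗ₖ (1 : Matrix κ κ ℝ)) *ᵥ x = ∑ i, ∑ j, A i j * ⟪v i, v j⟫ := by
  simp only [hx, dotProduct, mulVec, kroneckerMap_apply, one_apply, Fintype.sum_prod_type,
    mul_one, mul_zero, ite_mul, zero_mul, mul_ite, Finset.sum_ite_eq, Finset.mem_univ, if_true,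
    PiLp.inner_apply, RCLike.inner_apply, conj_trivial, Finset.mul_sum]
  refine Finset.sum_congr rfl fun i _ => ?_
  rw [Finset.sum_comm]
  exact Finset.sum_congr rfl fun j _ => Finset.sum_congr rfl fun k _ => by ring

theorem inner_inv_smul_control {ι E : Type*} [NormedAddCommGroup E] [InnerProductSpace ℝ E]
    (s : Finset ι) {m : ℝ} (hm : m ≠ 0) (w : ι → ℝ) (v : E) (v' g : ι → E) :
    ⟪v, m⁻¹ • (-(∑ j ∈ s, (m * w j) • (v - v' j)) - ∑ j ∈ s, m • g j - v)⟫ =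
      -∑ j ∈ s, w j * ⟪v, v - v' j⟫ - ∑ j ∈ s, ⟪g j, v⟫ - m⁻¹ * ⟪v, v⟫ := by
  simp only [real_inner_smul_right, inner_sub_right, inner_neg_right, inner_sum,
    real_inner_comm v (g _), mul_assoc, ← Finset.mul_sum]
  field_simp

section WeightedSums

variable {ι E : Type*} [Fintype ι] [NormedAddCommGroup E] [InnerProductSpace ℝ E]

theorem sum_laplacian_mul_inner [DecidableEq ι] {w : ι → ι → ℝ} (hw_diag : ∀ i, w i i = 0)
    {L : Matrix ι ι ℝ}
    (hL : ∀ i j, L i j = if i = j then ∑ k ∈ Finset.univ.erase i, w i k else -w i j) (v : ι → E) :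
    ∑ i, ∑ j, L i j * ⟪v i, v j⟫ = ∑ i, ∑ j, w i j * ⟪v i, v i - v j⟫ := by
  have hL' : ∀ i j, L i j = (if i = j then ∑ k, w i k else 0) - w i j := by
    intro i j
    rw [hL]
    split_ifs with h
    · subst h; rw [Finset.sum_erase _ (hw_diag i), hw_diag, sub_zero]
    · rw [zero_sub]
  simp only [hL', sub_mul, ite_mul, zero_mul, Finset.sum_sub_distrib, Finset.sum_ite_eq,
    Finset.mem_univ, if_true, inner_sub_right, mul_sub, Finset.sum_mul]

theorem sum_mul_inner_sub_nonneg {w : ι → ι → ℝ} (hw_symm : ∀ i j, w i j = w j i)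
    (hw_nonneg : ∀ i j, 0 ≤ w i j) (v : ι → E) :
    0 ≤ ∑ i, ∑ j, w i j * ⟪v i, v i - v j⟫ := by
  have hswap : ∑ i, ∑ j, w i j * ⟪v i, v i - v j⟫ = ∑ i, ∑ j, w i j * ⟪v j, v j - v i⟫ := by
    rw [Finset.sum_comm]; simp only [hw_symm]
  have htwice : 2 * ∑ i, ∑ j, w i j * ⟪v i, v i - v j⟫ = ∑ i, ∑ j, w i j * ‖v i - v j‖ ^ 2 := by
    rw [two_mul]; nth_rewrite 2 [hswap]
    simp only [← Finset.sum_add_distrib, ← mul_add]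
    congr! 3 with i _ j _
    rw [← real_inner_self_eq_norm_sq, inner_sub_left, ← neg_sub (v i) (v j), inner_neg_right]
    ring
  have : 0 ≤ ∑ i, ∑ j, w i j * ‖v i - v j‖ ^ 2 :=
    Finset.sum_nonneg fun i _ => Finset.sum_nonneg fun j _ => mul_nonneg (hw_nonneg i j) (sq_nonneg _)
  linarith

theorem sum_mul_inner_self_nonneg {c : ι → ℝ} (hc : ∀ i, 0 ≤ c i) (v : ι → E) :
    0 ≤ ∑ i, c i * ⟪v i, v i⟫ :=
  Finset.sum_nonneg fun i _ => mul_nonneg (hc i) real_inner_self_nonneg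

theorem sum_mul_inner_self_eq_zero_iff {c : ι → ℝ} (hc : ∀ i, 0 < c i) (v : ι → E) :
    ∑ i, c i * ⟪v i, v i⟫ = 0 ↔ ∀ i, v i = 0 := by
  rw [Finset.sum_eq_zero_iff_of_nonneg fun i _ => mul_nonneg (hc i).le real_inner_self_nonneg]
  simp [(hc _).ne']

end WeightedSums

section Graph

variable {V E : Type*} [Fintype V] (G : SimpleGraph V) [DecidableRel G.Adj]
  [NormedAddCommGroup E] [InnerProductSpace ℝ E]

theorem sum_neighborFinset_inner_sub {g : V → V → E} (hg : ∀ i j, G.Adj i j → g j i = -g i j)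
    (v : V → E) :
    ∑ i, ∑ j ∈ G.neighborFinset i, ⟪g i j, v i - v j⟫ =
      2 * ∑ i, ∑ j ∈ G.neighborFinset i, ⟪g i j, v i⟫ := by
  have hswap : ∑ i, ∑ j ∈ G.neighborFinset i, ⟪g i j, v j⟫ =
      ∑ j, ∑ i ∈ G.neighborFinset j, ⟪g i j, v j⟫ :=
    Finset.sum_comm' fun i j => by simp [G.adj_comm]
  have hodd : ∑ j, ∑ i ∈ G.neighborFinset j, ⟪g i j, v j⟫ =
      -∑ j, ∑ i ∈ G.neighborFinset j, ⟪g j i, v j⟫ := by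
    simp only [← Finset.sum_neg_distrib]
    refine Finset.sum_congr rfl fun j _ => Finset.sum_congr rfl fun i hi => ?_
    rw [hg j i ((G.mem_neighborFinset j i).1 hi), inner_neg_left]
  simp only [inner_sub_right, Finset.sum_sub_distrib, hswap, hodd]
  ring

theorem hasDerivAt_sum_neighborFinset_comp_sub [CompleteSpace E] {P : V → V → E → ℝ}
    {p : V → ℝ → E} {v : V → E} {t : ℝ}
    (hP : ∀ i j, G.Adj i j → DifferentiableAt ℝ (P i j) (p i t - p j t))
    (hp : ∀ i, HasDerivAt (p i) (v i) t) :
    HasDerivAt (fun s => ∑ i, ∑ j ∈ G.neighborFinset i, P i j (p i s - p j s))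
      (∑ i, ∑ j ∈ G.neighborFinset i, ⟪gradient (P i j) (p i t - p j t), v i - v j⟫) t := by
  refine HasDerivAt.fun_sum fun i _ => HasDerivAt.fun_sum fun j hj => ?_
  have := (hP i j ((G.mem_neighborFinset i j).1 hj)).hasGradientAt.hasFDerivAt.comp_hasDerivAt t
    ((hp i).sub (hp j))
  simpa [Function.comp_def] using this

theorem hasDerivAt_pairwise_energy [CompleteSpace E] {P : V → V → E → ℝ}
    (hP_symm : ∀ i j, P i j = P j i) (hP_even : ∀ i j z, P i j (-z) = P i j z)
    (hP_diff : ∀ i j, G.Adj i j → Differentiable ℝ (P i j)) {p v : V → ℝ → E} {a : V → E} {t : ℝ}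
    (hp : ∀ i, HasDerivAt (p i) (v i t) t) (hv : ∀ i, HasDerivAt (v i) (a i) t) :
    HasDerivAt (fun s => 1 / 2 * ∑ i, (∑ j ∈ G.neighborFinset i, P i j (p i s - p j s)
        + ⟪v i s, v i s⟫))
      (∑ i, (∑ j ∈ G.neighborFinset i, ⟪gradient (P i j) (p i t - p j t), v i t⟫
        + ⟪v i t, a i⟫)) t := by
  have hodd : ∀ i j, G.Adj i j → gradient (P j i) (p j t - p i t) =
      -gradient (P i j) (p i t - p j t) := fun i j h => by
    rw [hP_symm j i, ← neg_sub (p i t), gradient_neg_of_even (hP_diff i j h) (hP_even i j)]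
  simp only [Finset.sum_add_distrib]
  refine (((hasDerivAt_sum_neighborFinset_comp_sub G (fun i j h => hP_diff i j h _) hp).add
    (HasDerivAt.fun_sum fun i _ => (hv i).inner ℝ (hv i))).const_mul _).congr_deriv ?_
  rw [sum_neighborFinset_inner_sub G (g := fun i j => gradient (P i j) (p i t - p j t)) hodd]
  simp only [real_inner_comm (v _ t) (a _), ← two_mul, ← Finset.mul_sum]
  ring

end Graph

theorem energy_derivative_mass_scaled_general
    (N n : ℕ)
    (m : Fin N → ℝ) (hm : ∀ i, 0 < m i)
    (G : SimpleGraph (Fin N)) [DecidableRel G.Adj]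
    (w : Fin N → Fin N → ℝ)
    (hw_symm : ∀ i j, w i j = w j i)
    (hw_nonneg : ∀ i j, 0 ≤ w i j)
    (hw_diag : ∀ i, w i i = 0)
    (hw_adj : ∀ i j, 0 < w i j ↔ G.Adj i j)
    -- the potential `Ṽ^{ij}`, viewed as a function of the relative position
    -- vector `e_pⁱ - e_pʲ`
    (V : Fin N → Fin N → EuclideanSpace ℝ (Fin n) → ℝ)
    (hV_symm : ∀ i j, V i j = V j i)
    (hV_rad : ∀ i j (z z' : EuclideanSpace ℝ (Fin n)), ‖z‖ = ‖z'‖ → V i j z = V i j z')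
    (hV_diff : ∀ i j, G.Adj i j → Differentiable ℝ (V i j))
    (ep ev u : Fin N → ℝ → EuclideanSpace ℝ (Fin n))
    (hu : ∀ i t, u i t =
      -(∑ j ∈ G.neighborFinset i, (m i * w i j) • (ev i t - ev j t))
      - (∑ j ∈ G.neighborFinset i, m i • gradient (V i j) (ep i t - ep j t))
      - ev i t)
    (hep : ∀ i t, HasDerivAt (ep i) (ev i t) t)
    (hev : ∀ i t, HasDerivAt (ev i) ((m i)⁻¹ • u i t) t)
    (L : Matrix (Fin N) (Fin N) ℝ)
    (hL : ∀ i j, L i j = if i = j then ∑ k ∈ Finset.univ.erase i, w i k else -w i j)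
    (J : ℝ → ℝ)
    (hJ : ∀ t, J t = (1 / 2) * ∑ i,
      ((∑ j ∈ G.neighborFinset i, V i j (ep i t - ep j t)) + ⟪ev i t, ev i t⟫))
    -- the stacked vector `e_v(t) ∈ ℝ^{Nn}`
    (e : ℝ → Fin N × Fin n → ℝ)
    (he : ∀ t p, e t p = ev p.1 t p.2) :
    ∀ t : ℝ,
      HasDerivAt J
        (-(e t ⬝ᵥ (L ⊗ₖ (1 : Matrix (Fin n) (Fin n) ℝ)).mulVec (e t))
          - e t ⬝ᵥ (Matrix.diagonal (fun i => (m i)⁻¹) ⊗ₖ (1 : Matrix (Fin n) (Fin n) ℝ)).mulVec (e t)) t ∧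
      (-(e t ⬝ᵥ (L ⊗ₖ (1 : Matrix (Fin n) (Fin n) ℝ)).mulVec (e t))
          - e t ⬝ᵥ (Matrix.diagonal (fun i => (m i)⁻¹) ⊗ₖ (1 : Matrix (Fin n) (Fin n) ℝ)).mulVec (e t) ≤ 0) ∧
      ((-(e t ⬝ᵥ (L ⊗ₖ (1 : Matrix (Fin n) (Fin n) ℝ)).mulVec (e t))
          - e t ⬝ᵥ (Matrix.diagonal (fun i => (m i)⁻¹) ⊗ₖ (1 : Matrix (Fin n) (Fin n) ℝ)).mulVec (e t) = 0) →
        ∀ i, ev i t = 0) := by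
  intro t
  have hw_zero : ∀ i j, ¬G.Adj i j → w i j = 0 := fun i j h =>
    le_antisymm (not_lt.1 (mt (hw_adj i j).1 h)) (hw_nonneg i j)
  have hpower : ∀ i, ⟪ev i t, (m i)⁻¹ • u i t⟫ = -∑ j, w i j * ⟪ev i t, ev i t - ev j t⟫
      - ∑ j ∈ G.neighborFinset i, ⟪gradient (V i j) (ep i t - ep j t), ev i t⟫
      - (m i)⁻¹ * ⟪ev i t, ev i t⟫ := fun i => by
    rw [hu, inner_inv_smul_control _ (hm i).ne', Finset.sum_subset (Finset.subset_univ _)]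
    intro j _ hj
    rw [hw_zero i j (by simpa using hj), zero_mul]
  have hQ : -(e t ⬝ᵥ (L ⊗ₖ (1 : Matrix (Fin n) (Fin n) ℝ)).mulVec (e t))
      - e t ⬝ᵥ (Matrix.diagonal (fun i => (m i)⁻¹) ⊗ₖ (1 : Matrix (Fin n) (Fin n) ℝ)).mulVec (e t)
      = -∑ i, ∑ j, w i j * ⟪ev i t, ev i t - ev j t⟫ - ∑ i, (m i)⁻¹ * ⟪ev i t, ev i t⟫ := by
    rw [dotProduct_kronecker_one_mulVec L (ev · t) (he t),
      dotProduct_kronecker_one_mulVec (diagonal _) (ev · t) (he t),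
      sum_laplacian_mul_inner hw_diag hL]
    simp [diagonal_apply]
  have hB := sum_mul_inner_sub_nonneg hw_symm hw_nonneg (ev · t)
  have hC := sum_mul_inner_self_nonneg (fun i => (inv_pos.2 (hm i)).le) (ev · t)
  rw [hQ]
  refine ⟨?_, by linarith, fun h =>
    (sum_mul_inner_self_eq_zero_iff (fun i => inv_pos.2 (hm i)) (ev · t)).1 (by linarith)⟩
  rw [show J = _ from funext hJ]
  refine (hasDerivAt_pairwise_energy G hV_symm (fun i j z => hV_rad i j _ _ (norm_neg z)) hV_diff
    (fun i => hep i t) fun i => hev i t).congr_deriv ?_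
  simp only [hpower, Finset.sum_add_distrib, Finset.sum_sub_distrib, Finset.sum_neg_distrib]
  ring

/-- **Theorem 2 (energy decay).** Along any solution of the error system
`ė_pⁱ = e_vⁱ`, `mᵢė_vⁱ = uⁱ` with control law
`uⁱ = -Σ_{j∈Nᵢ} mᵢw_{ij}(e_vⁱ - e_vʲ) - Σ_{j∈Nᵢ} mᵢ∇_{e_pⁱ}Ṽ^{ij} - e_vⁱ`,
the energy `J = ½Σᵢ(Ṽⁱ + e_vⁱᵀe_vⁱ)` satisfies
`J̇ = -e_vᵀ(L⊗Iₙ)e_v - e_vᵀ(M⁻¹⊗Iₙ)e_v ≤ 0`, where `M⁻¹ = diag(1/m₁, …, 1/m_N)`,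
and `J̇ = 0` only if all `e_vⁱ = 0`. -/
theorem energy_derivative_mass_scaled
    (N n : ℕ)
    (m : Fin N → ℝ) (hm : ∀ i, 0 < m i)
    (G : SimpleGraph (Fin N)) [DecidableRel G.Adj] (hG : G.Connected)
    (w : Fin N → Fin N → ℝ)
    (hw_symm : ∀ i j, w i j = w j i)
    (hw_nonneg : ∀ i j, 0 ≤ w i j)
    (hw_diag : ∀ i, w i i = 0)
    (hw_adj : ∀ i j, 0 < w i j ↔ G.Adj i j)
    -- the potential `Ṽ^{ij}`, viewed as a function of the relative position
    -- vector `e_pⁱ - e_pʲ`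
    (V : Fin N → Fin N → EuclideanSpace ℝ (Fin n) → ℝ)
    (hV_symm : ∀ i j, V i j = V j i)
    (hV_rad : ∀ i j (z z' : EuclideanSpace ℝ (Fin n)), ‖z‖ = ‖z'‖ → V i j z = V i j z')
    (hV_diff : ∀ i j, G.Adj i j → Differentiable ℝ (V i j))
    (hV_nonneg : ∀ i j z, 0 ≤ V i j z)
    (ep ev u : Fin N → ℝ → EuclideanSpace ℝ (Fin n))
    (hu : ∀ i t, u i t =
      -(∑ j ∈ G.neighborFinset i, (m i * w i j) • (ev i t - ev j t))
      - (∑ j ∈ G.neighborFinset i, m i • gradient (V i j) (ep i t - ep j t))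
      - ev i t)
    (hep : ∀ i t, HasDerivAt (ep i) (ev i t) t)
    (hev : ∀ i t, HasDerivAt (ev i) ((m i)⁻¹ • u i t) t)
    (L : Matrix (Fin N) (Fin N) ℝ)
    (hL : ∀ i j, L i j = if i = j then ∑ k ∈ Finset.univ.erase i, w i k else -w i j)
    (J : ℝ → ℝ)
    (hJ : ∀ t, J t = (1 / 2) * ∑ i,
      ((∑ j ∈ G.neighborFinset i, V i j (ep i t - ep j t)) + ⟪ev i t, ev i t⟫))
    -- the stacked vector `e_v(t) ∈ ℝ^{Nn}`
    (e : ℝ → Fin N × Fin n → ℝ)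
    (he : ∀ t p, e t p = ev p.1 t p.2) :
    ∀ t : ℝ,
      HasDerivAt J
        (-(e t ⬝ᵥ (L ⊗ₖ (1 : Matrix (Fin n) (Fin n) ℝ)).mulVec (e t))
          - e t ⬝ᵥ (Matrix.diagonal (fun i => (m i)⁻¹) ⊗ₖ (1 : Matrix (Fin n) (Fin n) ℝ)).mulVec (e t)) t ∧
      (-(e t ⬝ᵥ (L ⊗ₖ (1 : Matrix (Fin n) (Fin n) ℝ)).mulVec (e t))
          - e t ⬝ᵥ (Matrix.diagonal (fun i => (m i)⁻¹) ⊗ₖ (1 : Matrix (Fin n) (Fin n) ℝ)).mulVec (e t) ≤ 0) ∧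
      ((-(e t ⬝ᵥ (L ⊗ₖ (1 : Matrix (Fin n) (Fin n) ℝ)).mulVec (e t))
          - e t ⬝ᵥ (Matrix.diagonal (fun i => (m i)⁻¹) ⊗ₖ (1 : Matrix (Fin n) (Fin n) ℝ)).mulVec (e t) = 0) →
        ∀ i, ev i t = 0) :=
  energy_derivative_mass_scaled_general N n m hm G w hw_symm hw_nonneg hw_diag hw_adj V hV_symm
    hV_rad hV_diff ep ev u hu hep hev L hL J hJ e he
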